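/- The word t^ω(0), the fixed point of the morphism t given by t(0) = 01120, t(1) = 12001, t(2) = 2, contains exactly 6 distinct palindromic factors (namely ε, 0, 1, 2, 00, 11) and is 2^+-free (overlap-free). -/
import Mathlib


open List

/-- `v` occurs in the infinite word `w` at position `i`. -/
def FactorAt {A : Type} (v : List A) (w : ℕ → A) (i : ℕ) : Prop :=
  v = (List.range v.length).map fun k => w (i + k)

/-- `v` is a (finite) factor of the infinite word `w`. -/
def IsFactorInf {A : Type} (v : List A) (w : ℕ → A) : Prop :=
  ∃ i, FactorAt v w i

/-- `v` is a (finite) factor of the bi-infinite word `w`. -/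
def IsFactorBi {A : Type} (v : List A) (w : ℤ → A) : Prop :=
  ∃ i : ℤ, v = (List.range v.length).map fun k => w (i + k)

/-- `v` is a repetition with period `u`, i.e. `u ≠ ε` and `v` is a prefix of
`u^ω`; its exponent is `|v|/|u|`. -/
def IsRep {A : Type} (v u : List A) : Prop :=
  u ≠ [] ∧ v <+: (List.replicate v.length u).flatten

/-- The infinite word `w` is `β⁺`-free: every factor that is a repetition
with period `u` has exponent at most `β`. -/
def FreePlusInf {A : Type} (β : ℝ) (w : ℕ → A) : Prop :=
  ∀ v u : List A, IsFactorInf v w → IsRep v u → (v.length : ℝ) ≤ β * u.length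

/-- The infinite word `w` is `β`-free: every factor that is a repetition
with period `u` has exponent strictly less than `β`. -/
def FreeInf {A : Type} (β : ℝ) (w : ℕ → A) : Prop :=
  ∀ v u : List A, IsFactorInf v w → IsRep v u → (v.length : ℝ) < β * u.length

/-- The bi-infinite word `w` is `β⁺`-free. -/
def FreePlusBi {A : Type} (β : ℝ) (w : ℤ → A) : Prop :=
  ∀ v u : List A, IsFactorBi v w → IsRep v u → (v.length : ℝ) ≤ β * u.length

/-- The bi-infinite word `w` is `β`-free. -/
def FreeBi {A : Type} (β : ℝ) (w : ℤ → A) : Prop :=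
  ∀ v u : List A, IsFactorBi v w → IsRep v u → (v.length : ℝ) < β * u.length

/-- The finite word `w` is `β⁺`-free. -/
def FreePlusList {A : Type} (β : ℝ) (w : List A) : Prop :=
  ∀ v u : List A, v <:+: w → IsRep v u → (v.length : ℝ) ≤ β * u.length

/-- The infinite word `w` has at most `p` distinct palindromic factors
(including the empty word). -/
def AtMostPalInf {A : Type} (p : ℕ) (w : ℕ → A) : Prop :=
  ∃ S : Finset (List A), S.card ≤ p ∧ ∀ v, IsFactorInf v w → v.reverse = v → v ∈ S

/-- The bi-infinite word `w` has at most `p` distinct palindromic factors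
(including the empty word). -/
def AtMostPalBi {A : Type} (p : ℕ) (w : ℤ → A) : Prop :=
  ∃ S : Finset (List A), S.card ≤ p ∧ ∀ v, IsFactorBi v w → v.reverse = v → v ∈ S

/-- The finite word `w` has at most `p` distinct palindromic factors
(including the empty word). -/
def AtMostPalList {A : Type} (p : ℕ) (w : List A) : Prop :=
  ∃ S : Finset (List A), S.card ≤ p ∧ ∀ v, v <:+: w → v.reverse = v → v ∈ S

/-- The image of the infinite word `w` under the (non-erasing) morphism `f`,
extended letter by letter. -/
def MorphImage {A B : Type} [Inhabited B] (f : A → List B) (w : ℕ → A) : ℕ → B :=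
  fun n => (((List.range (n + 1)).map fun i => f (w i)).flatten).getD n default

/-- The morphism t : 0 ↦ 01120, 1 ↦ 12001, 2 ↦ 2. -/
def tMor : Fin 3 → List (Fin 3) :=
  ![[0, 1, 1, 2, 0], [1, 2, 0, 0, 1], [2]]


namespace Stmt9aux
open List

def Wl : ℕ → List (Fin 3)
  | 0 => [0]
  | k+1 => ((Wl k).map tMor).flatten

def sB (n : ℕ) : Bool := decide ((Nat.digits 2 n).sum % 2 = 1)

def g (b : Bool) : List Bool := [b, !b, !b, b]

def pb (c : Fin 3) : Option Bool := if c = 2 then none else some (decide (c = 1))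

def piW (w : List (Fin 3)) : List Bool := w.filterMap pb

def F : List (List (Fin 3)) := [[], [0],[1],[2],[0,0],[0,1],[1,1],[1,2],[2,0],
  [0,0,1],[0,1,1],[0,1,2],[1,1,2],[1,2,0],[2,0,0],[2,0,1],
  [0,0,1,1],[0,0,1,2],[0,1,1,2],[0,1,2,0],[1,1,2,0],[1,2,0,0],[1,2,0,1],[2,0,0,1],[2,0,1,1],[2,0,1,2]]

lemma sB_zero : sB 0 = false := by simp [sB]

lemma sB_even (m : ℕ) : sB (2*m) = sB m := by
  rcases Nat.eq_zero_or_pos m with h|h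
  · subst h; rfl
  · unfold sB
    rw [Nat.digits_def' (by norm_num : 1 < 2) (by omega)]
    rw [show 2*m % 2 = 0 by omega, show 2*m/2 = m by omega]
    simp

lemma sB_odd (m : ℕ) : sB (2*m+1) = !(sB m) := by
  unfold sB
  rw [Nat.digits_def' (by norm_num : 1 < 2) (by omega)]
  rw [show (2*m+1) % 2 = 1 by omega, show (2*m+1)/2 = m by omega]
  simp only [List.sum_cons]
  rw [← decide_not]
  exact decide_eq_decide.mpr (by omega)

lemma noThree (r : ℕ) : ¬ (sB r = sB (r+1) ∧ sB (r+1) = sB (r+2)) := by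
  rintro ⟨h1, h2⟩
  rcases Nat.even_or_odd r with ⟨m, hm⟩ | ⟨m, hm⟩
  · rw [show r = 2*m by omega, show 2*m+1 = 2*m+1 from rfl, sB_even, sB_odd] at h1
    simp at h1
  · rw [show r+1 = 2*(m+1) by omega, show r+2 = 2*(m+1)+1 by omega, sB_even, sB_odd] at h2
    simp at h2


theorem sB_no_overlap : ∀ p, 1 ≤ p → ∀ i, (∀ j, j ≤ p → sB (i+j) = sB (i+j+p)) → False := by
  intro p
  induction p using Nat.strong_induction_on with
  | _ p IH =>
    intro hp i H
    rcases Nat.even_or_odd p with ⟨q, hq⟩ | ⟨q, hq⟩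
    · -- p = 2q even
      have hq1 : 1 ≤ q := by omega
      apply IH q (by omega) hq1 (i/2)
      intro j hj
      rcases Nat.even_or_odd i with ⟨m, hm⟩ | ⟨m, hm⟩
      · have h1 : i/2 = m := by omega
        have h2 := H (2*j) (by omega)
        rw [show i + 2*j + p = 2*(m+j+q) by omega, show i + 2*j = 2*(m+j) by omega,
          sB_even, sB_even] at h2
        rw [h1]
        exact h2
      · have h1 : i/2 = m := by omega
        have h2 := H (2*j) (by omega)
        rw [show i + 2*j + p = 2*(m+j+q)+1 by omega, show i + 2*j = 2*(m+j)+1 by omega,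
          sB_odd, sB_odd] at h2
        rw [h1]
        simpa using h2
    · -- p = 2q+1 odd
      rcases Nat.eq_zero_or_pos q with hq0 | hq1
      · have e1 := H 0 (by omega)
        have e2 := H 1 (by omega)
        apply noThree i
        constructor
        · rw [show i + 0 + p = i + 1 by omega] at e1; simpa using e1
        · rw [show i + 1 + p = i + 2 by omega] at e2; exact e2
      · rcases Nat.even_or_odd i with ⟨m, hm⟩ | ⟨m, hm⟩
        · -- i = 2m
          have A : ∀ j, j ≤ q → sB (m+j) = !sB (m+j+q) := by
            intro j hj
            have h2 := H (2*j) (by omega)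
            rw [show i + 2*j + p = 2*(m+j+q)+1 by omega, show i + 2*j = 2*(m+j) by omega,
              sB_even, sB_odd] at h2
            exact h2
          have B : ∀ j, j ≤ q → (!sB (m+j)) = sB (m+j+q+1) := by
            intro j hj
            have h2 := H (2*j+1) (by omega)
            rw [show i + (2*j+1) + p = 2*(m+j+q+1) by omega,
              show i + (2*j+1) = 2*(m+j)+1 by omega, sB_odd, sB_even] at h2
            rw [show m+j+q+1 = m + j + q + 1 by ring] at h2
            exact h2
          have C : ∀ j, j ≤ q → sB (m+j+q) = sB (m+j+q+1) := by
            intro j hj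
            have a := A j hj
            have b := B j hj
            rw [a] at b
            simpa using b
          apply noThree (m+q)
          have c0 := C 0 (by omega)
          have c1 := C 1 hq1
          constructor
          · simpa using c0
          · rw [show m+q+1 = m+1+q by ring, show m+q+2 = m+1+q+1 by ring]
            exact c1
        · -- i = 2m+1
          have A : ∀ j, j ≤ q → sB (m+1+j) = !sB (m+j+q+1) := by
            intro j hj
            have h2 := H (2*j+1) (by omega)
            rw [show i + (2*j+1) + p = 2*(m+j+q+1)+1 by omega,
              show i + (2*j+1) = 2*(m+1+j) by omega, sB_even, sB_odd] at h2
            exact h2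
          have B : ∀ j, j ≤ q → (!sB (m+j)) = sB (m+j+q+1) := by
            intro j hj
            have h2 := H (2*j) (by omega)
            rw [show i + 2*j + p = 2*(m+j+q+1) by omega,
              show i + 2*j = 2*(m+j)+1 by omega, sB_odd, sB_even] at h2
            exact h2
          have C : ∀ j, j ≤ q → sB (m+j) = sB (m+j+1) := by
            intro j hj
            have a := A j hj
            have b := B j hj
            rw [← b] at a
            rw [show m+1+j = m+j+1 by ring] at a
            simp at a
            exact a.symm
          apply noThree m
          have c0 := C 0 (by omega)
          have c1 := C 1 hq1
          constructor
          · simpa using c0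
          · rw [show m+1+1 = m+2 from rfl] at c1; simpa using c1




-- flatten of prefix is prefix
lemma flatten_prefix {A : Type} {l₁ l₂ : List (List A)} (h : l₁ <+: l₂) :
    l₁.flatten <+: l₂.flatten := by
  obtain ⟨r, rfl⟩ := h
  rw [List.flatten_append]
  exact ⟨r.flatten, rfl⟩

-- nonerasing: length lower bound
lemma length_le_flatten {A B : Type} (f : A → List B) (hf : ∀ a, (f a) ≠ []) :
    ∀ w : List A, w.length ≤ ((w.map f).flatten).length := by
  intro w
  induction w with
  | nil => simp
  | cons c w ih =>
    simp only [List.map_cons, List.flatten_cons, List.length_append, List.length_cons]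
    have : 1 ≤ (f c).length := List.length_pos_iff.mpr (hf c)
    omega

-- a prefix of the flatten is a prefix of flatten of a take
lemma prefix_flatten_take {A B : Type} (f : A → List B) (hf : ∀ a, (f a) ≠ [])
    {v : List B} {w : List A} (h : v <+: (w.map f).flatten) :
    v <+: ((w.take v.length).map f).flatten := by
  rcases le_or_gt w.length v.length with hl | hl
  · rwa [List.take_of_length_le hl]
  · have hp : (w.take v.length).map f <+: w.map f := (List.take_prefix _ _).map f
    have hp2 := flatten_prefix hp
    refine List.prefix_of_prefix_length_le h hp2 ?_
    have := length_le_flatten f hf (w.take v.length)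
    rw [List.length_take] at this
    omega

-- three-way split of an infix of an append
lemma infix_append_split {A : Type} {v X Y : List A} (h : v <:+: X ++ Y) :
    v <:+: X ∨ v <:+: Y ∨
      ∃ v₁ v₂, v = v₁ ++ v₂ ∧ v₁ ≠ [] ∧ v₁ <:+ X ∧ v₂ <+: Y := by
  obtain ⟨S, T, hST⟩ := h
  rcases le_or_gt X.length S.length with h1 | h1
  · right; left
    have hY : Y = S.drop X.length ++ (v ++ T) := by
      have h' : S ++ (v ++ T) = X ++ Y := by rw [← hST]; simp [List.append_assoc]
      have := congrArg (List.drop X.length) h'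
      rw [List.drop_append_of_le_length h1, List.drop_left] at this
      exact this.symm
    exact ⟨_, _, by rw [hY, List.append_assoc]⟩
  · rcases le_or_gt (S.length + v.length) X.length with h2 | h2
    · left
      have h' : (S ++ v) ++ T = X ++ Y := hST
      have hX : X = (S ++ v) ++ T.take (X.length - (S.length + v.length)) := by
        have := congrArg (List.take X.length) h'
        rw [List.take_left, List.take_append,
          List.take_of_length_le (by simp only [List.length_append]; omega),
          List.length_append] at this
        exact this.symm
      exact ⟨S, _, by rw [hX, List.append_assoc]⟩
    · right; right
      refine ⟨v.take (X.length - S.length), v.drop (X.length - S.length),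
        (List.take_append_drop _ v).symm, ?_, ?_, ?_⟩
      · intro hemp
        have := congrArg List.length hemp
        rw [List.length_take] at this
        simp only [List.length_nil] at this
        omega
      · have h' : (S ++ v) ++ T = X ++ Y := hST
        have hX : X = S ++ v.take (X.length - S.length) := by
          have := congrArg (List.take X.length) h'
          rw [List.take_left, List.take_append_of_le_length (by simp only [List.length_append]; omega),
            List.take_append, List.take_of_length_le (le_of_lt h1)] at this
          exact this.symm
        exact ⟨S, hX.symm⟩
      · have h' : (S ++ v) ++ T = X ++ Y := hST
        have hY : Y = v.drop (X.length - S.length) ++ T := by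
          have := congrArg (List.drop X.length) h'
          rw [List.drop_left, List.drop_append_of_le_length (by simp only [List.length_append]; omega),
            List.drop_append, List.drop_of_length_le (le_of_lt h1),
            List.nil_append] at this
          exact this.symm
        exact ⟨T, hY.symm⟩

-- combining a suffix and a prefix across a boundary
lemma suffix_prefix_infix {A : Type} {a X b Y : List A} (h1 : a <:+ X) (h2 : b <+: Y) :
    a ++ b <:+: X ++ Y := by
  obtain ⟨X', rfl⟩ := h1
  obtain ⟨Y', rfl⟩ := h2
  exact ⟨X', Y', by simp [List.append_assoc]⟩

-- main transfer lemma
lemma infix_flatten_reduce {A B : Type} (f : A → List B) (hf : ∀ a, (f a) ≠ []) :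
    ∀ (w : List A) (v : List B), v <:+: (w.map f).flatten →
      ∃ p, p <:+: w ∧ p.length ≤ max 1 v.length ∧ v <:+: (p.map f).flatten := by
  intro w
  induction w with
  | nil =>
    intro v hv
    simp at hv
    exact ⟨[], by simp [hv]⟩
  | cons c w ih =>
    intro v hv
    simp only [List.map_cons, List.flatten_cons] at hv
    rcases infix_append_split hv with h | h | ⟨v₁, v₂, rfl, hne, hsuf, hpre⟩
    · exact ⟨[c], ⟨[], w, by simp⟩, by simp, by simpa using h.trans ⟨[], by simp⟩⟩
    · obtain ⟨p, hp1, hp2, hp3⟩ := ih v h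
      exact ⟨p, hp1.trans (List.infix_cons (List.infix_refl w)), hp2, hp3⟩
    · have hpre' := prefix_flatten_take f hf hpre
      refine ⟨c :: w.take v₂.length, ?_, ?_, ?_⟩
      · exact (List.cons_prefix_cons.mpr ⟨rfl, List.take_prefix _ _⟩).isInfix
      · simp only [List.length_cons, List.length_take, List.length_append]
        have : 1 ≤ v₁.length := List.length_pos_iff.mpr hne
        have := min_le_left v₂.length w.length
        omega
      · simp only [List.map_cons, List.flatten_cons]
        exact suffix_prefix_infix hsuf hpre'



lemma tMor_ne_nil : ∀ c : Fin 3, tMor c ≠ [] := by decide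

lemma infix_iff_tails_inits {A : Type} (v w : List A) :
    v <:+: w ↔ ∃ t ∈ w.tails, v ∈ t.inits := by
  simp only [List.mem_tails, List.mem_inits, List.infix_iff_prefix_suffix]
  tauto

lemma closureF : ∀ p ∈ F, ∀ t ∈ ((p.map tMor).flatten).tails, ∀ v ∈ t.inits,
    v.length ≤ 4 → v ∈ F := by decide

lemma smallFactor : ∀ k v, v <:+: Wl k → v.length ≤ 4 → v ∈ F := by
  intro k
  induction k with
  | zero =>
    intro v hv _
    rw [show Wl 0 = [0] from rfl, infix_iff_tails_inits] at hv
    obtain ⟨t, ht, hv⟩ := hv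
    fin_cases ht <;> fin_cases hv <;> decide
  | succ k ih =>
    intro v hv hlen
    obtain ⟨p, hp, hplen, hvp⟩ := infix_flatten_reduce tMor tMor_ne_nil (Wl k) v
      (by simpa [Wl] using hv)
    have hpF : p ∈ F := ih p hp (by omega)
    rw [infix_iff_tails_inits] at hvp
    obtain ⟨t, ht, hvt⟩ := hvp
    exact closureF p hpF t ht v hvt hlen

lemma piW_append (a b : List (Fin 3)) : piW (a ++ b) = piW a ++ piW b :=
  List.filterMap_append ..

lemma piW_infix {v w : List (Fin 3)} (h : v <:+: w) : piW v <:+: piW w := by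
  obtain ⟨s, t, rfl⟩ := h
  exact ⟨piW s, piW t, by rw [← piW_append, ← piW_append]⟩

lemma step1 : ∀ w : List (Fin 3), piW ((w.map tMor).flatten) = (((piW w).map g)).flatten := by
  intro w
  induction w with
  | nil => rfl
  | cons c w ih =>
    simp only [List.map_cons, List.flatten_cons]
    rw [piW_append, ih]
    fin_cases c <;> rfl

lemma gsB (m : ℕ) : g (sB m) = [sB (4*m), sB (4*m+1), sB (4*m+2), sB (4*m+3)] := by
  have h0 : sB (4*m) = sB m := by rw [show 4*m = 2*(2*m) by ring, sB_even, sB_even]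
  have h1 : sB (4*m+1) = !sB m := by rw [show 4*m+1 = 2*(2*m)+1 by ring, sB_odd, sB_even]
  have h2 : sB (4*m+2) = !sB m := by rw [show 4*m+2 = 2*(2*m+1) by ring, sB_even, sB_odd]
  have h3 : sB (4*m+3) = sB m := by
    rw [show 4*m+3 = 2*(2*m+1)+1 by ring, sB_odd, sB_odd, Bool.not_not]
  rw [h0, h1, h2, h3]
  rfl

lemma step2 : ∀ N, (((List.range N).map sB).map g).flatten = (List.range (4*N)).map sB := by
  intro N
  induction N with
  | zero => rfl
  | succ N ih =>
    have e : List.range (4*(N+1)) = List.range (4*N) ++ [4*N, 4*N+1, 4*N+2, 4*N+3] := by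
      rw [show 4*(N+1) = (4*N)+1+1+1+1 by ring, List.range_succ, List.range_succ,
        List.range_succ, List.range_succ]
      simp [List.append_assoc]
    rw [List.range_succ, e]
    simp only [List.map_append, List.flatten_append, ih, List.map_cons, List.map_nil,
      List.flatten_cons, List.flatten_nil, List.append_nil, gsB]

lemma pi_Wl : ∀ k, piW (Wl k) = (List.range (4^k)).map sB := by
  intro k
  induction k with
  | zero =>
    rw [show (4:ℕ)^0 = 1 from rfl, show List.range 1 = [0] from rfl]
    simp [Wl, piW, pb, sB_zero]
  | succ k ih =>
    rw [show Wl (k+1) = ((Wl k).map tMor).flatten from rfl, step1, ih, step2,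
      pow_succ, Nat.mul_comm]

lemma infix_map_range_eval {w : List Bool} {N : ℕ} (h : w <:+: (List.range N).map sB) :
    ∃ off, ∀ j (hj : j < w.length), w[j] = sB (off + j) := by
  obtain ⟨S, T, hST⟩ := h
  refine ⟨S.length, fun j hj => ?_⟩
  have hN : S.length + (w.length + T.length) = N := by
    have := congrArg List.length hST
    simpa using this
  have hST' : S ++ (w ++ T) = (List.range N).map sB := by rw [← List.append_assoc, hST]
  have hb2 : S.length + j < (S ++ (w ++ T)).length := by
    simp only [List.length_append]; omega
  have e2 : (S ++ (w ++ T))[S.length + j]'hb2 = sB (S.length + j) := by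
    rw [List.getElem_of_eq hST' hb2]
    simp
  rw [List.getElem_append_right (by omega)] at e2
  simp only [Nat.add_sub_cancel_left] at e2
  rw [List.getElem_append_left hj] at e2
  exact e2

lemma pattern_periodic {A : Type} (b : A) (y : List A) (j : ℕ) (hj : j ≤ y.length + 1) :
    (b :: y ++ b :: y ++ [b]).getD j b = (b :: y ++ b :: y ++ [b]).getD (j + (y.length+1)) b := by
  have hpat : b :: y ++ b :: y ++ [b] = (b :: y) ++ ((b :: y) ++ [b]) := by simp
  rw [hpat]
  have hP : (b :: y).length = y.length + 1 := by simp
  rcases lt_or_eq_of_le hj with hlt | heq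
  · rw [List.getD_append _ _ _ _ (by omega), List.getD_append_right _ _ _ _ (by omega), hP,
      show j + (y.length+1) - (y.length+1) = j by omega, List.getD_append _ _ _ _ (by omega)]
  · subst heq
    have L : (b :: y ++ (b :: y ++ [b])).getD (y.length+1) b = b := by
      rw [List.getD_append_right _ _ _ _ (by simp), hP, Nat.sub_self]
      rfl
    have R : (b :: y ++ (b :: y ++ [b])).getD (y.length+1 + (y.length+1)) b = b := by
      rw [List.getD_append_right _ _ _ _ (by simp), hP,
        show y.length+1 + (y.length+1) - (y.length+1) = y.length+1 by omega,
        List.getD_append_right _ _ _ _ (by simp), hP, Nat.sub_self]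
      rfl
    rw [L, R]

section U

variable (u : ℕ → Fin 3)

def PrefU (m : ℕ) : List (Fin 3) := ((List.range m).map (fun i => tMor (u i))).flatten

lemma prefU_prefix {a b : ℕ} (h : a ≤ b) : PrefU u a <+: PrefU u b := by
  unfold PrefU
  apply flatten_prefix
  apply List.IsPrefix.map
  have : List.range a = (List.range b).take a := by
    rw [List.take_range, Nat.min_eq_left h]
  rw [this]
  exact List.take_prefix _ _

lemma prefU_len (m : ℕ) : m ≤ (PrefU u m).length := by
  unfold PrefU
  have h2 := length_le_flatten (fun i => tMor (u i)) (fun i => tMor_ne_nil _) (List.range m)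
  rw [List.length_range] at h2
  exact h2

lemma u_eval (hu : MorphImage tMor u = u) (n : ℕ) : u n = (PrefU u (n+1)).getD n default := by
  conv_lhs => rw [← hu]
  rfl

lemma u_getElem (hu : MorphImage tMor u = u) : ∀ m n (h : n < (PrefU u m).length), (PrefU u m)[n] = u n := by
  intro m n h
  have h2 : n < (PrefU u (n+1)).length := by have := prefU_len u (n+1); omega
  have key : (PrefU u (n+1))[n]'h2 = u n := by
    rw [← List.getD_eq_getElem _ default h2, ← u_eval u hu n]
  rcases le_or_gt m (n+1) with hm | hm
  · rw [List.IsPrefix.getElem (prefU_prefix u hm) h]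
    exact key
  · rw [← List.IsPrefix.getElem (prefU_prefix u (le_of_lt hm)) h2]
    exact key

lemma list_eq_map_range {A : Type} (l : List A) (f : ℕ → A)
    (h : ∀ n (hn : n < l.length), l[n] = f n) : l = (List.range l.length).map f := by
  apply List.ext_getElem (by simp)
  intro n h1 h2
  simp only [List.getElem_map, List.getElem_range]
  exact h n h1

lemma Wl_eq (hu : MorphImage tMor u = u) (hu0 : u 0 = 0) : ∀ k, Wl k = (List.range (Wl k).length).map u := by
  intro k
  induction k with
  | zero =>
    show [0] = (List.range ([0] : List (Fin 3)).length).map u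
    rw [show (([0] : List (Fin 3)).length) = 1 from rfl, show List.range 1 = [0] from rfl,
      List.map_cons, List.map_nil, hu0]
  | succ k ih =>
    have h1 : Wl (k+1) = PrefU u ((Wl k).length) := by
      show ((Wl k).map tMor).flatten = _
      conv_lhs => rw [ih]
      unfold PrefU
      rw [List.map_map]
      rfl
    rw [h1]
    exact list_eq_map_range _ u (fun n hn => u_getElem u hu _ n hn)

lemma Wl_len_lb (hu : MorphImage tMor u = u) (hu0 : u 0 = 0) : ∀ k, k < (Wl k).length := by
  intro k
  induction k with
  | zero => decide
  | succ k ih =>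
    have hne : Wl k ≠ [] := by
      intro h
      rw [h] at ih
      simp at ih
    obtain ⟨a, rest, hcons⟩ := List.exists_cons_of_ne_nil hne
    have h0 : (Wl k)[0]'(by omega) = u 0 := by
      rw [List.getElem_of_eq (Wl_eq u hu hu0 k) (by omega)]
      simp
    have ha : a = 0 := by
      have e := List.getElem_of_eq hcons (show (0:ℕ) < (Wl k).length by omega)
      simp only [List.getElem_cons_zero] at e
      rw [← e, h0, hu0]
    have hflat : Wl (k+1) = tMor 0 ++ ((rest.map tMor).flatten) := by
      show ((Wl k).map tMor).flatten = _
      rw [hcons, ha]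
      simp
    have h5 : (tMor 0).length = 5 := rfl
    have hrest := length_le_flatten tMor tMor_ne_nil rest
    have hlen : (Wl k).length = rest.length + 1 := by rw [hcons]; simp
    have : (Wl (k+1)).length = 5 + ((rest.map tMor).flatten).length := by
      rw [hflat]; simp [h5]
    omega

lemma factorAt_iff (v : List (Fin 3)) (w : ℕ → Fin 3) (i : ℕ) :
    FactorAt v w i ↔ ∀ j (hj : j < v.length), v[j] = w (i + j) := by
  constructor
  · intro h j hj
    rw [List.getElem_of_eq h hj]
    simp
  · intro h
    apply List.ext_getElem (by simp)
    intro n h1 h2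
    simp only [List.getElem_map, List.getElem_range]
    exact h n h1

lemma factor_infix_closed {v w' : List (Fin 3)} (hf : IsFactorInf v u) (h : w' <:+: v) :
    IsFactorInf w' u := by
  obtain ⟨i, hi⟩ := hf
  obtain ⟨S, T, hST⟩ := h
  refine ⟨i + S.length, (factorAt_iff _ u _).mpr fun j hj => ?_⟩
  rw [factorAt_iff] at hi
  have hb : S.length + j < v.length := by
    have := congrArg List.length hST
    simp only [List.length_append] at this
    omega
  have hv : v = S ++ (w' ++ T) := by rw [← hST, List.append_assoc]
  have e : v[S.length + j]'hb = w'[j]'hj := by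
    rw [List.getElem_of_eq hv hb, List.getElem_append_right (by omega)]
    simp only [Nat.add_sub_cancel_left]
    rw [List.getElem_append_left hj]
  rw [← e, hi (S.length + j) hb, Nat.add_assoc]

lemma factorAt_extend {v : List (Fin 3)} {i : ℕ} (h : FactorAt v u i) :
    FactorAt (v ++ [u (i + v.length)]) u i := by
  rw [factorAt_iff] at h ⊢
  intro j hj
  simp only [List.length_append, List.length_cons, List.length_nil] at hj
  rcases lt_or_eq_of_le (Nat.lt_succ_iff.mp (by omega : j < v.length + 1)) with hlt | heq
  · rw [List.getElem_append_left hlt]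
    exact h j hlt
  · rw [List.getElem_append_right (by omega)]
    simp only [show j - v.length = 0 from by omega, Nat.sub_self, List.getElem_cons_zero, heq]

lemma factorAt_tail {a : Fin 3} {v : List (Fin 3)} {i : ℕ} (h : FactorAt (a :: v) u i) :
    FactorAt v u (i+1) := by
  rw [factorAt_iff] at h ⊢
  intro j hj
  have := h (j+1) (by simp; omega)
  simp only [List.getElem_cons_succ] at this
  rw [this, show i + (j+1) = i + 1 + j by omega]

lemma factor_to_infix_Wl (hu : MorphImage tMor u = u) (hu0 : u 0 = 0) {v : List (Fin 3)} {i : ℕ} (h : FactorAt v u i) (k : ℕ)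
    (hk : i + v.length ≤ (Wl k).length) : v <:+: Wl k := by
  have e : v = ((Wl k).drop i).take v.length := by
    apply List.ext_getElem
    · simp only [List.length_take, List.length_drop]
      omega
    · intro n h1 h2
      rw [List.getElem_take, List.getElem_drop]
      have hb : i + n < (Wl k).length := by omega
      have e2 : (Wl k)[i+n]'hb = u (i+n) := by
        rw [List.getElem_of_eq (Wl_eq u hu hu0 k) hb]
        simp
      rw [e2]
      exact (factorAt_iff v u i).mp h n h1
  rw [e]
  exact List.IsInfix.trans ((List.take_prefix _ _).isInfix) ((List.drop_suffix _ _).isInfix)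

lemma small_factor_mem (hu : MorphImage tMor u = u) (hu0 : u 0 = 0) {v : List (Fin 3)} (h : IsFactorInf v u) (hlen : v.length ≤ 4) :
    v ∈ F := by
  obtain ⟨i, hi⟩ := h
  have hk : i + v.length ≤ (Wl (i + v.length)).length := le_of_lt (Wl_len_lb u hu hu0 _)
  exact smallFactor _ v (factor_to_infix_Wl u hu hu0 hi _ hk) hlen

lemma no_overlap_ne2 (hu : MorphImage tMor u = u) (hu0 : u 0 = 0) (a : Fin 3) (ha : a ≠ 2) (x : List (Fin 3)) (i : ℕ)
    (hf : FactorAt (a :: x ++ a :: x ++ [a]) u i) : False := by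
  set v := a :: x ++ a :: x ++ [a] with hv
  have hk : i + v.length ≤ (Wl (i + v.length)).length := le_of_lt (Wl_len_lb u hu hu0 _)
  have hinf : v <:+: Wl (i + v.length) := factor_to_infix_Wl u hu hu0 hf _ hk
  have hpi : piW v <:+: (List.range (4^(i+v.length))).map sB := by
    have := piW_infix hinf
    rwa [pi_Wl] at this
  obtain ⟨bb, hbb⟩ : ∃ bb, pb a = some bb := by
    fin_cases a
    · exact ⟨false, rfl⟩
    · exact ⟨true, rfl⟩
    · exact absurd rfl ha
  have hv2 : piW v = bb :: piW x ++ bb :: piW x ++ [bb] := by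
    simp only [hv, piW, List.filterMap_append, List.filterMap_cons, hbb, List.append_assoc]
    rfl
  rw [hv2] at hpi
  obtain ⟨off, hoff⟩ := infix_map_range_eval hpi
  apply sB_no_overlap ((piW x).length + 1) (Nat.le_add_left 1 _) off
  intro j hj
  have hlen : (bb :: piW x ++ bb :: piW x ++ [bb]).length = 2*((piW x).length+1)+1 := by
    simp only [List.length_cons, List.length_append, List.length_nil]
    omega
  have h1 : j < (bb :: piW x ++ bb :: piW x ++ [bb]).length := by omega
  have h2 : j + ((piW x).length+1) < (bb :: piW x ++ bb :: piW x ++ [bb]).length := by omega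
  have e1 := hoff j h1
  have e2 := hoff (j + ((piW x).length+1)) h2
  have e3 := pattern_periodic bb (piW x) j hj
  rw [List.getD_eq_getElem _ _ h1, List.getD_eq_getElem _ _ h2] at e3
  rw [e1, e2] at e3
  rwa [← Nat.add_assoc] at e3

lemma F_pal : ∀ v ∈ F, v.reverse = v →
    v ∈ ([[], [0], [1], [2], [0, 0], [1, 1]] : List (List (Fin 3))) := by decide

lemma F22 : ([2,2] : List (Fin 3)) ∉ F := by decide

lemma F_mid2 : ∀ e b : Fin 3, [e, 2, b] ∈ F → e = 1 ∧ b = 0 := by decide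

lemma F_lead2 : ∀ c : Fin 3, [2, c] ∈ F → c = 0 := by decide

lemma no_overlap (hu : MorphImage tMor u = u) (hu0 : u 0 = 0) (a : Fin 3) (x : List (Fin 3)) (i : ℕ)
    (hf : FactorAt (a :: x ++ a :: x ++ [a]) u i) : False := by
  by_cases ha : a = 2
  case neg => exact no_overlap_ne2 u hu hu0 a ha x i hf
  subst ha
  cases x with
  | nil =>
    have h22 : IsFactorInf [2,2] u :=
      factor_infix_closed u ⟨i, hf⟩ ⟨[], [2], rfl⟩
    exact F22 (small_factor_mem u hu hu0 h22 (by norm_num))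
  | cons x0 xt =>
    set x := x0 :: xt with hxdef
    have hxne : x ≠ [] := by simp [hxdef]
    have hext : FactorAt ((2 :: x ++ 2 :: x ++ [2]) ++ [u (i + (2 :: x ++ 2 :: x ++ [2] : List (Fin 3)).length)]) u i :=
      factorAt_extend u hf
    set b := u (i + (2 :: x ++ 2 :: x ++ [2] : List (Fin 3)).length) with hbdef
    set e := x.getLast hxne with hedef
    have hx : x.dropLast ++ [e] = x := List.dropLast_append_getLast hxne
    have hsplit : (2 :: x ++ 2 :: x ++ [2]) ++ [b] = (2 :: x ++ 2 :: x.dropLast) ++ [e, 2, b] := by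
      calc (2 :: x ++ 2 :: x ++ [2]) ++ [b]
          = 2 :: x ++ 2 :: (x.dropLast ++ [e]) ++ [2, b] := by
            rw [hx]; simp [List.append_assoc]
        _ = (2 :: x ++ 2 :: x.dropLast) ++ [e, 2, b] := by simp [List.append_assoc]
    have htriple : [e, 2, b] <:+: (2 :: x ++ 2 :: x ++ [2]) ++ [b] := by
      refine ⟨2 :: x ++ 2 :: x.dropLast, [], ?_⟩
      rw [List.append_nil]
      exact hsplit.symm
    have hmemT := small_factor_mem u hu hu0
      (factor_infix_closed u ⟨i, hext⟩ htriple) (by norm_num)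
    obtain ⟨he1, hb0⟩ := F_mid2 e b hmemT
    have hpair : [2, x0] <:+: (2 :: x ++ 2 :: x ++ [2] : List (Fin 3)) := by
      refine ⟨[], xt ++ 2 :: x ++ [2], ?_⟩
      simp [hxdef]
    have hx0 : x0 = 0 := F_lead2 x0 (small_factor_mem u hu hu0
      (factor_infix_closed u ⟨i, hf⟩ hpair) (by norm_num))
    have hll : (2 :: x ++ 2 :: x ++ [2]) ++ [b] = 2 :: (x ++ 2 :: x ++ [2, b]) := by
      simp [List.append_assoc]
    rw [hll] at hext
    have htail := factorAt_tail u hext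
    have hpat : x ++ 2 :: x ++ [2, b] = 0 :: (xt ++ [2]) ++ 0 :: (xt ++ [2]) ++ [0] := by
      rw [hxdef, hx0, hb0]
      simp [List.append_assoc]
    rw [hpat] at htail
    exact no_overlap_ne2 u hu hu0 0 (by decide) (xt ++ [2]) (i+1) htail

end U

lemma pal_decomp {A : Type} (v : List A) (h2 : 2 ≤ v.length) (hrev : v.reverse = v) :
    ∃ a m, v = a :: m ++ [a] ∧ m.reverse = m := by
  obtain ⟨a, t, rfl⟩ := List.exists_cons_of_ne_nil
    (show v ≠ [] by intro h; rw [h] at h2; simp at h2)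
  have htne : t ≠ [] := by
    intro h
    subst h
    simp at h2
  have ht := List.dropLast_append_getLast htne
  have hrev2 : t.getLast htne :: (t.dropLast.reverse ++ [a])
      = a :: (t.dropLast ++ [t.getLast htne]) := by
    calc t.getLast htne :: (t.dropLast.reverse ++ [a])
        = (a :: (t.dropLast ++ [t.getLast htne])).reverse := by simp
      _ = (a :: t).reverse := by rw [ht]
      _ = a :: t := hrev
      _ = a :: (t.dropLast ++ [t.getLast htne]) := by rw [ht]
  injection hrev2 with hc hm
  refine ⟨a, t.dropLast, ?_, ?_⟩
  · show a :: t = a :: (t.dropLast ++ [a])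
    conv_lhs => rw [← ht]
    rw [hc]
  · rw [hc] at hm
    have h3 := congrArg List.dropLast hm
    simpa [List.dropLast_concat] using h3

lemma six_len : ∀ w ∈ ([[], [0], [1], [2], [0, 0], [1, 1]] : List (List (Fin 3))),
    w.length ≤ 2 := by decide

lemma pal_forward (u : ℕ → Fin 3) (hu : MorphImage tMor u = u) (hu0 : u 0 = 0) :
    ∀ n (v : List (Fin 3)), v.length = n → IsFactorInf v u → v.reverse = v →
    v ∈ ([[], [0], [1], [2], [0, 0], [1, 1]] : List (List (Fin 3))) := by
  intro n
  induction n using Nat.strong_induction_on with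
  | _ n IH =>
    intro v hvn hfac hrev
    rcases le_or_gt v.length 4 with h4 | h4
    · exact F_pal v (small_factor_mem u hu hu0 hfac h4) hrev
    · obtain ⟨a, m, hv, hm⟩ := pal_decomp v (by omega) hrev
      have hminfix : m <:+: v := ⟨[a], [a], by rw [hv]; simp⟩
      have hmfac := factor_infix_closed u hfac hminfix
      have hmlen : m.length + 2 = v.length := by rw [hv]; simp
      have hmem := IH m.length (by omega) m rfl hmfac hm
      have := six_len m hmem
      omega

lemma u_at (u : ℕ → Fin 3) (hu : MorphImage tMor u = u) (hu0 : u 0 = 0) (n : ℕ)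
    (hn : n < (Wl 2).length) : u n = (Wl 2)[n]'hn := by
  rw [List.getElem_of_eq (Wl_eq u hu hu0 2) hn]
  simp

theorem freePlus (u : ℕ → Fin 3) (hu : MorphImage tMor u = u) (hu0 : u 0 = 0) :
    FreePlusInf 2 u := by
  intro v uper hfac hrep
  obtain ⟨hne, hpre⟩ := hrep
  by_contra hcon
  push_neg at hcon
  have hlen : 2 * uper.length + 1 ≤ v.length := by
    have h2 : (2:ℝ) * uper.length < v.length := hcon
    have : 2 * uper.length < v.length := by exact_mod_cast h2
    omega
  obtain ⟨a, x, rfl⟩ := List.exists_cons_of_ne_nil hne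
  simp only [List.length_cons] at hlen
  obtain ⟨n', hn'⟩ : ∃ n', v.length = 3 + n' := ⟨v.length - 3, by omega⟩
  have hpat_pre : ((a::x) ++ ((a::x) ++ [a])) <+: (List.replicate v.length (a::x)).flatten := by
    rw [hn', List.replicate_add, List.flatten_append]
    rw [show (List.replicate 3 (a::x)).flatten = (a::x) ++ ((a::x) ++ ((a::x) ++ [])) from rfl]
    rw [List.append_nil, List.append_assoc, List.append_assoc]
    apply (List.prefix_append_right_inj _).mpr
    apply (List.prefix_append_right_inj _).mpr
    exact List.cons_prefix_cons.mpr ⟨rfl, List.nil_prefix⟩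
  have hpat_v : ((a::x) ++ ((a::x) ++ [a])) <+: v :=
    List.prefix_of_prefix_length_le hpat_pre hpre
      (by simp only [List.length_append, List.length_cons, List.length_nil]; omega)
  obtain ⟨i0, hf0⟩ := factor_infix_closed u hfac hpat_v.isInfix
  have hf0' : FactorAt (a :: x ++ a :: x ++ [a]) u i0 := by
    have he : (a :: x ++ a :: x ++ [a] : List (Fin 3)) = (a::x) ++ ((a::x) ++ [a]) := by
      simp [List.append_assoc]
    rw [he]
    exact hf0
  exact no_overlap u hu hu0 a x i0 hf0' 

end Stmt9aux

/-- The fixed point `t^ω(0)` contains exactly 6 distinct palindromic factors,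
namely ε, 0, 1, 2, 00, 11, and is `2⁺`-free (overlap-free). -/
theorem stmt9 (u : ℕ → Fin 3) (hu : MorphImage tMor u = u) (hu0 : u 0 = 0) :
    (∀ v : List (Fin 3), (IsFactorInf v u ∧ v.reverse = v) ↔
      v ∈ ([[], [0], [1], [2], [0, 0], [1, 1]] : List (List (Fin 3)))) ∧
    FreePlusInf 2 u := by
  have u1 : u 1 = 1 := by rw [Stmt9aux.u_at u hu hu0 1 (by decide)]; decide
  have u2 : u 2 = 1 := by rw [Stmt9aux.u_at u hu hu0 2 (by decide)]; decide
  have u3 : u 3 = 2 := by rw [Stmt9aux.u_at u hu hu0 3 (by decide)]; decide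
  have u7 : u 7 = 0 := by rw [Stmt9aux.u_at u hu hu0 7 (by decide)]; decide
  have u8 : u 8 = 0 := by rw [Stmt9aux.u_at u hu hu0 8 (by decide)]; decide
  constructor
  · intro v
    constructor
    · rintro ⟨hfac, hrev⟩
      exact Stmt9aux.pal_forward u hu hu0 v.length v rfl hfac hrev
    · intro hv
      fin_cases hv
      · exact ⟨⟨0, rfl⟩, rfl⟩
      · refine ⟨⟨0, ?_⟩, rfl⟩
        rw [Stmt9aux.factorAt_iff]
        intro j hj
        simp only [List.length_cons, List.length_nil] at hj
        interval_cases j <;> simp [hu0]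
      · refine ⟨⟨1, ?_⟩, rfl⟩
        rw [Stmt9aux.factorAt_iff]
        intro j hj
        simp only [List.length_cons, List.length_nil] at hj
        interval_cases j <;> simp [u1]
      · refine ⟨⟨3, ?_⟩, rfl⟩
        rw [Stmt9aux.factorAt_iff]
        intro j hj
        simp only [List.length_cons, List.length_nil] at hj
        interval_cases j <;> simp [u3]
      · refine ⟨⟨7, ?_⟩, rfl⟩
        rw [Stmt9aux.factorAt_iff]
        intro j hj
        simp only [List.length_cons, List.length_nil] at hj
        interval_cases j <;> simp [u7, u8]
      · refine ⟨⟨1, ?_⟩, rfl⟩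
        rw [Stmt9aux.factorAt_iff]
        intro j hj
        simp only [List.length_cons, List.length_nil] at hj
        interval_cases j <;> simp [u1, u2]
  · exact Stmt9aux.freePlus u hu hu0
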